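/- Let blocks 1,…,N_full be distributed among S subnets as follows: first each subnet receives the |C| common blocks, then the remaining N_full − |C| blocks are assigned round-robin (block i goes to subnet i mod S), and finally each subnet with fewer than N_sub blocks is topped up with distinct blocks it does not already contain. If (N_full + (S−1)|C|)/S ≤ N_sub ≤ N_full, then every block is contained in at least one subnet and every subnet contains exactly N_sub distinct blocks. -/

import Mathlib

/-- The round-robin core assignment: subnet `s` receives all common blocks `C`,
plus every non-common block whose index `i` (in the sorted enumeration of the
non-common blocks) satisfies `i % S = s`. -/
def roundRobinCore (S Nfull : ℕ) (C : Finset (Fin Nfull)) (s : Fin S) :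
    Finset (Fin Nfull) :=
  C ∪ (Finset.univ \ C).filter
    (fun b => (((Finset.univ \ C).sort (· ≤ ·)).idxOf b) % S = s.val)

/-!
The non-common blocks, listed in increasing order, are dealt to the subnets by their position
modulo `S`, so each subnet receives at most `⌈(N_full - |C|) / S⌉` of them. Together with the
`|C|` common blocks this is at most `N_sub` by the lower bound on `N_sub`, and
`N_sub ≤ N_full` leaves room to top every subnet up to `N_sub` blocks. Every block already lies
in some round-robin core.
-/

open Finset

theorem Nat.mul_count_modEq_le {r : ℕ} (hr : 0 < r) (b v : ℕ) :
    r * b.count (· ≡ v [MOD r]) ≤ b + r - 1 := by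
  have hb := Nat.div_add_mod b r
  rw [Nat.count_modEq_card _ hr]
  split_ifs with h <;> rw [mul_add] <;> omega

theorem card_filter_idxOf_sort_mod_le {α : Type*} [LinearOrder α] (t : Finset α) (r v : ℕ) :
    #{b ∈ t | (t.sort (· ≤ ·)).idxOf b % r = v} ≤ Nat.count (· ≡ v [MOD r]) #t := by
  rw [Nat.count_eq_card_filter_range]
  refine card_le_card_of_injOn (fun b => (t.sort (· ≤ ·)).idxOf b) ?_ ?_
  · intro b hb
    rw [coe_filter] at hb ⊢
    refine ⟨mem_range.2 ((List.idxOf_lt_length_of_mem (mem_sort _ |>.2 hb.1)).trans_eq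
      (length_sort _)), ?_⟩
    show _ % r = v % r
    rw [← hb.2, Nat.mod_mod]
  · intro a ha b hb hab
    exact (List.idxOf_inj (mem_sort _ |>.2 (mem_filter.1 ha).1)).1 hab

theorem mul_card_roundRobinCore_le (S Nfull : ℕ) (C : Finset (Fin Nfull)) (s : Fin S) :
    S * #(roundRobinCore S Nfull C s) ≤ Nfull + (S - 1) * #C + (S - 1) := by
  have hS : 0 < S := s.pos
  have hdisj : Disjoint C ((univ \ C).filter
      fun b => ((univ \ C).sort (· ≤ ·)).idxOf b % S = s.val) :=
    disjoint_left.2 fun _ hC hb => (mem_sdiff.1 (mem_filter.1 hb).1).2 hC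
  have hrest := (Nat.mul_le_mul_left S (card_filter_idxOf_sort_mod_le (univ \ C) S s)).trans
    (Nat.mul_count_modEq_le hS _ s)
  rw [card_univ_sdiff, Fintype.card_fin] at hrest
  have hC : #C ≤ Nfull := by simpa using card_le_univ C
  rw [roundRobinCore, card_union_of_disjoint hdisj, mul_add]
  obtain ⟨S', rfl⟩ : ∃ S', S = S' + 1 := ⟨S - 1, by omega⟩
  simp only [Nat.add_sub_cancel, add_mul, one_mul] at hrest ⊢
  omega

theorem card_roundRobinCore_le {S Nfull Nsub : ℕ} {C : Finset (Fin Nfull)}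
    (hkey : Nfull + (S - 1) * #C ≤ S * Nsub) (s : Fin S) :
    #(roundRobinCore S Nfull C s) ≤ Nsub := by
  have hS : 0 < S := s.pos
  refine Nat.lt_succ_iff.1 (Nat.lt_of_mul_lt_mul_left (a := S) ?_)
  have := mul_card_roundRobinCore_le S Nfull C s
  rw [Nat.mul_succ]
  omega

theorem exists_mem_roundRobinCore {S Nfull : ℕ} (hS : 0 < S) (C : Finset (Fin Nfull))
    (b : Fin Nfull) : ∃ s, b ∈ roundRobinCore S Nfull C s := by
  by_cases hb : b ∈ C
  · exact ⟨⟨0, hS⟩, mem_union_left _ hb⟩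
  · exact ⟨⟨_, Nat.mod_lt _ hS⟩, mem_union_right _ (mem_filter.2 ⟨by simpa using hb, rfl⟩)⟩

/-- Distributing blocks `1,…,N_full` among `S` subnets by first giving
each subnet the common blocks `C`, then assigning the remaining blocks round-robin
(block `i` to subnet `i mod S`), and finally topping each subnet up with distinct
blocks it does not yet contain, succeeds whenever
`(N_full + (S−1)|C|)/S ≤ N_sub ≤ N_full`: every block lies in some subnet and every
subnet has exactly `N_sub` distinct blocks. -/
theorem roundRobin_assignment_valid
    (S Nfull Nsub : ℕ) (hS : 0 < S)
    (C : Finset (Fin Nfull))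
    (hlow : ((Nfull : ℝ) + (S - 1) * C.card) / S ≤ Nsub)
    (hhigh : Nsub ≤ Nfull) :
    ∃ subnets : Fin S → Finset (Fin Nfull),
      (∀ s, roundRobinCore S Nfull C s ⊆ subnets s) ∧
      (∀ s, (subnets s).card = Nsub) ∧
      (∀ b : Fin Nfull, ∃ s, b ∈ subnets s) := by
  have hkey : Nfull + (S - 1) * #C ≤ S * Nsub := by
    rw [div_le_iff₀ (by positivity)] at hlow
    exact_mod_cast (by push_cast [Nat.cast_sub hS]; linarith :
      ((Nfull + (S - 1) * #C : ℕ) : ℝ) ≤ (S * Nsub : ℕ))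
  choose subnets hcore hcard using fun s =>
    exists_superset_card_eq (card_roundRobinCore_le hkey s) (by simpa using hhigh)
  refine ⟨subnets, hcore, hcard, fun b => ?_⟩
  obtain ⟨s, hs⟩ := exists_mem_roundRobinCore hS C b
  exact ⟨s, hcore s hs⟩
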